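/- arXiv:2311.16322 — 2 statements merged into one kernel-verified Lean document; each statement's English description precedes it below -/
import Mathlib

section
/- Let f, g : {X_i} → {Y_i} be morphisms of interaction spaces that are homotopic (connected by a finite chain of formal homotopies). Then the induced maps on interaction singular homology are equal: H_*(f) = H_*(g). -/
/-!
The classical prism operator `P` satisfies `∂P + P∂ = g♯ - f♯` on singular chains for a homotopy
from `f` to `g`. On the tensor product `⊗ᵢ S₋(Xᵢ)` a formal homotopy `H` is applied one factor at a
time: `Pᵢ` applies `f` in the factors before `i`, the prism of `Hᵢ` in factor `i` and `g` in the
factors after `i`, with the Koszul sign. The components `∂ⱼ` and `Pᵢ` anticommute for `j ≠ i`, and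
for `j = i` the prism identity leaves the difference of two consecutive mixed maps, so
`P = Σᵢ Pᵢ` satisfies `∂P + P∂ = g♯ - f♯` by telescoping. Since every stage of `H` is a morphism
of interaction spaces, `P` maps `T₋({Xᵢ})` into `T₋({Yᵢ})`, so a cycle modulo `T₋` is sent by
`f♯` and `g♯` to chains differing by a boundary modulo `T₋`. The identities are proved on chains
of arbitrary tuples of simplices, into which the graded chain groups embed.
-/

open scoped unitInterval

universe u

/-- An `n`-interaction space: a topological space `X` together with a covering
by `n` subspaces. -/
structure InterSp (n : ℕ) : Type (u + 1) where
  X : Type u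
  [top : TopologicalSpace X]
  C : Fin n → Set X
  covers : (⋃ i, C i) = Set.univ

attribute [instance] InterSp.top

namespace InterSp

variable {n : ℕ}

/-- A morphism of `n`-interaction spaces: a family of continuous maps
`f i : X i → Y i` such that, for `i ≠ j`, `f i u = f j v` iff `u = v`
(as points of the ambient space). -/
structure Mor (A B : InterSp n) where
  f : ∀ i, C(A.C i, B.C i)
  cond : ∀ i j, i ≠ j → ∀ (u : A.C i) (v : A.C j),
    ((f i u : B.X) = ((f j v : B.C j) : B.X)) ↔ ((u : A.X) = ((v : A.C j) : A.X))

/-- A formal homotopy between two morphisms of interaction spaces: a morphism of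
interaction spaces `(X × I, {Xᵢ × I}) → (Y, {Yᵢ})` restricting to `f` at `0` and
`g` at `1`. -/
structure FHtpy {A B : InterSp n} (f g : Mor A B) where
  H : ∀ i, C((A.C i) × I, B.C i)
  cond : ∀ i j, i ≠ j → ∀ (u : A.C i) (v : A.C j) (s t : I),
    ((H i (u, s) : B.X) = ((H j (v, t) : B.C j) : B.X)) ↔ ((u : A.X) = ((v : A.C j) : A.X))
  h0 : ∀ i u, H i (u, 0) = f.f i u
  h1 : ∀ i u, H i (u, 1) = g.f i u

/-- `f` and `g` are formally homotopic. -/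
def FHomotopic {A B : InterSp n} (f g : Mor A B) : Prop := Nonempty (FHtpy f g)

/-- `f` and `g` are homotopic: connected by a finite chain of formal homotopies. -/
def Homotopic {A B : InterSp n} (f g : Mor A B) : Prop :=
  Relation.ReflTransGen FHomotopic f g

end InterSp

/-- The standard topological `q`-simplex. -/
def SimplexT (q : ℕ) : Type :=
  {f : Fin (q + 1) → ℝ // (∀ i, 0 ≤ f i) ∧ ∑ i, f i = 1}

instance (q : ℕ) : TopologicalSpace (SimplexT q) := by
  unfold SimplexT; infer_instance

/-- The `r`-th face inclusion `Δ^q → Δ^{q+1}`. -/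
noncomputable def faceCM (q : ℕ) (r : Fin (q + 2)) : C(SimplexT q, SimplexT (q + 1)) where
  toFun f :=
    ⟨fun j => ∑ i ∈ Finset.univ.filter (fun i => r.succAbove i = j), f.1 i,
      ⟨fun j => Finset.sum_nonneg fun i _ => f.2.1 i, by
        rw [Finset.sum_fiberwise]
        exact f.2.2⟩⟩
  continuous_toFun := by
    apply Continuous.subtype_mk
    exact continuous_pi fun j =>
      continuous_finset_sum _ fun i _ => (continuous_apply i).comp continuous_subtype_val

/-- A singular simplex (of some dimension) in `X`. -/
abbrev SST (X : Type u) [TopologicalSpace X] : Type u := Σ q : ℕ, C(SimplexT q, X)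

variable {n : ℕ}

/-- A tuple of singular simplices, one in each subspace `X i`. -/
def TupF (A : InterSp n) : Type _ := ∀ i, SST ↥(A.C i)

/-- The total degree of a tuple of singular simplices. -/
def degT {A : InterSp n} (sg : TupF A) : ℕ := ∑ i, (sg i).1

/-- A tuple of singular simplices of total degree `p`:
a basis element of `(⊗ᵢ S₋(Xᵢ))ₚ`. -/
def Tup (A : InterSp n) (p : ℕ) : Type _ := {sg : TupF A // degT sg = p}

variable (R : Type) [CommRing R]

/-- The degree-`p` part of the tensor product `⊗ᵢ S₋(Xᵢ)` of the singular
chain complexes of the subspaces, over `R`. -/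
abbrev Ch (A : InterSp n) (p : ℕ) : Type _ := Tup A p →₀ R

/-- The summand of the tensor-product differential acting on the `i`-th factor
of a basis tuple, with its Koszul sign. -/
noncomputable def dTerm {A : InterSp n} {p : ℕ} (sg : Tup A (p + 1)) (i : Fin n) :
    Ch R A p :=
  match h : sg.1 i with
  | ⟨0, _⟩ => 0
  | ⟨q + 1, f⟩ =>
    ∑ r : Fin (q + 2),
      Finsupp.single
        (⟨Function.update sg.1 i ⟨q, f.comp (faceCM q r)⟩, by
          have h2 := sg.2
          have hi : (sg.1 i).1 = q + 1 := by rw [h]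
          show degT _ = p
          unfold degT at h2 ⊢
          have e1 : ∀ k, ((Function.update sg.1 i ⟨q, f.comp (faceCM q r)⟩) k).1
              = Function.update (fun k => (sg.1 k).1) i q k := by
            intro k
            rcases eq_or_ne k i with rfl | hk
            · exact (congrArg Sigma.fst (Function.update_self k _ sg.1)).trans
                (Function.update_self k q (fun k => (sg.1 k).1)).symm
            · exact (congrArg Sigma.fst (Function.update_of_ne hk _ sg.1)).trans
                (Function.update_of_ne hk q (fun k => (sg.1 k).1)).symm
          rw [Finset.sum_congr rfl fun k _ => e1 k,
            Finset.sum_update_of_mem (Finset.mem_univ i)]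
          have e2 := Finset.sum_eq_sum_sdiff_singleton_add (Finset.mem_univ i)
            (fun k => (sg.1 k).1)
          omega⟩ : Tup A p)
        ((((-1 : ℤ) ^
          ((∑ k ∈ Finset.univ.filter (fun k : Fin n => (k : ℕ) < (i : ℕ)), (sg.1 k).1)
            + (r : ℕ)) : ℤ) : R))

/-- The differential of the tensor product `⊗ᵢ S₋(Xᵢ)` of singular chain
complexes, `d(sg₁ ⊗ ⋯ ⊗ sgₙ) = Σᵢ (-1)^{dim sg₁ + ⋯ + dim sgᵢ₋₁} sg₁ ⊗ ⋯ ⊗ dsgᵢ ⊗ ⋯ ⊗ sgₙ`. -/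
noncomputable def dCh (A : InterSp n) (p : ℕ) : Ch R A (p + 1) →ₗ[R] Ch R A p :=
  Finsupp.lift (Ch R A p) R (Tup A (p + 1)) fun sg => ∑ i : Fin n, dTerm R sg i

/-- The differential, from degree `p` to degree `p - 1` (zero in degree `0`). -/
noncomputable def dFrom (A : InterSp n) : ∀ p, Ch R A p →ₗ[R] Ch R A (p - 1)
  | 0 => 0
  | q + 1 => dCh R A q

/-- The common intersection of the images of a tuple of singular simplices, in
the ambient space, is empty. -/
def interEmpty {A : InterSp n} (sg : TupF A) : Prop :=
  (⋂ i, Subtype.val '' Set.range (sg i).2) = (∅ : Set A.X)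

/-- The submodule `T₋({Xᵢ})` of `⊗ᵢ S₋(Xᵢ)` generated by the elementary
tensors of singular simplices whose images have empty common intersection. -/
noncomputable def Tsub (A : InterSp n) (p : ℕ) : Submodule R (Ch R A p) :=
  Submodule.span R {x | ∃ sg : Tup A p, interEmpty sg.1 ∧ x = Finsupp.single sg 1}

/-- The identity morphism of an interaction space. -/
def InterSp.Mor.id (A : InterSp n) : InterSp.Mor A A where
  f _ := ContinuousMap.id _
  cond _ _ _ _ _ := Iff.rfl

/-- Composition of morphisms of interaction spaces. -/
def InterSp.Mor.comp {A B C' : InterSp n} (g : InterSp.Mor B C') (f : InterSp.Mor A B) :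
    InterSp.Mor A C' where
  f i := (g.f i).comp (f.f i)
  cond i j hij u v := (g.cond i j hij (f.f i u) (f.f j v)).trans (f.cond i j hij u v)

/-- The chain map `⊗ᵢ fᵢ^♯` induced in degree `p` by a morphism of interaction
spaces, on the tensor product of singular chain complexes. -/
noncomputable def chMap {A B : InterSp n} (f : InterSp.Mor A B) (p : ℕ) :
    Ch R A p →ₗ[R] Ch R B p :=
  Finsupp.lift (Ch R B p) R (Tup A p) fun sg =>
    Finsupp.single ⟨fun i => ⟨(sg.1 i).1, (f.f i).comp (sg.1 i).2⟩, sg.2⟩ (1 : R)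

open Finset

universe v

lemma Fin.val_succAbove_eq_ite {m : ℕ} (s : Fin (m + 1)) (k : Fin m) :
    (s.succAbove k : ℕ) = if (k : ℕ) < s then (k : ℕ) else k + 1 := by
  rcases Nat.lt_or_ge (k : ℕ) s with h | h
  · rw [if_pos h, Fin.succAbove_of_castSucc_lt _ _ (by simpa [Fin.lt_def] using h)]
    simp
  · rw [if_neg (by omega), Fin.succAbove_of_le_castSucc _ _ (by simpa [Fin.le_def] using h)]
    simp

lemma Fin.val_predAbove_eq_ite {m : ℕ} (r : Fin m) (i : Fin (m + 1)) :
    (r.predAbove i : ℕ) = if (r : ℕ) < i then (i : ℕ) - 1 else i := by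
  rcases Nat.lt_or_ge (r : ℕ) i with h | h
  · rw [if_pos h, Fin.predAbove_of_castSucc_lt _ _ (by simpa [Fin.lt_def] using h)]
    simp
  · rw [if_neg (by omega), Fin.predAbove_of_le_castSucc _ _ (by simpa [Fin.le_def] using h)]
    simp

lemma sum_filter_sum_fiber {α β M : Type*} [Fintype α] [Fintype β] [DecidableEq β]
    [AddCommMonoid M] (g : α → β) (P : β → Prop) [DecidablePred P] (t : α → M) :
    ∑ i with P i, ∑ k with g k = i, t k = ∑ k with P (g k), t k := by
  rw [← sum_fiberwise_of_maps_to (t := univ.filter P) (g := g)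
    (fun i hi => by simpa using (mem_filter.1 hi).2) t]
  refine sum_congr rfl fun j hj => sum_congr ?_ fun _ _ => rfl
  ext k
  simp only [mem_filter, mem_univ, true_and]
  exact ⟨fun h => ⟨h ▸ (mem_filter.1 hj).2, h⟩, And.right⟩

namespace SimplexT

variable {a b : ℕ}

lemma sum_filter_le_one (x : SimplexT a) (S : Fin (a + 1) → Prop) [DecidablePred S] :
    ∑ i with S i, x.1 i ≤ 1 :=
  (sum_le_sum_of_subset_of_nonneg (filter_subset _ _) fun i _ _ => x.2.1 i).trans_eq x.2.2

/-- The affine map `Δ^a → Δ^b × I` sending the vertex `k` to `(φ k, [S k])`. -/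
noncomputable def toPrism (φ : Fin (a + 1) → Fin (b + 1)) (S : Fin (a + 1) → Prop)
    [DecidablePred S] : C(SimplexT a, SimplexT b × I) where
  toFun x :=
    (⟨fun j => ∑ i with φ i = j, x.1 i,
      fun j => sum_nonneg fun i _ => x.2.1 i, by rw [sum_fiberwise]; exact x.2.2⟩,
     ⟨∑ i with S i, x.1 i, sum_nonneg fun i _ => x.2.1 i, sum_filter_le_one x S⟩)
  continuous_toFun := by
    refine .prodMk (.subtype_mk (continuous_pi fun j => ?_) _) (.subtype_mk ?_ _) <;>
    exact continuous_finsetSum _ fun i _ => (continuous_apply i).comp continuous_subtype_val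

lemma toPrism_congr {φ ψ : Fin (a + 1) → Fin (b + 1)} {S T : Fin (a + 1) → Prop}
    [DecidablePred S] [DecidablePred T] (hφ : ∀ k, φ k = ψ k) (hS : ∀ k, S k ↔ T k) :
    toPrism φ S = toPrism ψ T := by
  obtain rfl : φ = ψ := funext hφ
  obtain rfl : S = T := funext fun k => propext (hS k)
  congr

lemma toPrism_comp_faceCM (φ : Fin (a + 2) → Fin (b + 1)) (S : Fin (a + 2) → Prop)
    [DecidablePred S] (s : Fin (a + 2)) :
    (toPrism φ S).comp (faceCM a s) = toPrism (φ ∘ s.succAbove) (S ∘ s.succAbove) := by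
  ext x : 1
  refine Prod.ext (Subtype.ext (funext fun j => ?_)) (Subtype.ext ?_)
  · exact sum_filter_sum_fiber s.succAbove (φ · = j) x.1
  · exact sum_filter_sum_fiber s.succAbove S x.1

lemma faceCM_prodMap_comp_toPrism (φ : Fin (a + 1) → Fin (b + 1)) (S : Fin (a + 1) → Prop)
    [DecidablePred S] (s : Fin (b + 2)) :
    ((faceCM b s).prodMap (ContinuousMap.id I)).comp (toPrism φ S)
      = toPrism (s.succAbove ∘ φ) S := by
  ext x : 1
  refine Prod.ext (Subtype.ext (funext fun j => ?_)) rfl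
  exact sum_filter_sum_fiber φ (s.succAbove · = j) x.1

noncomputable def atHeight (a : ℕ) (t : I) : C(SimplexT a, SimplexT a × I) :=
  (ContinuousMap.id _).prodMk (.const _ t)

lemma toPrism_id_true : toPrism (id : Fin (a + 1) → _) (fun _ => True) = atHeight a 1 := by
  ext x : 1
  refine Prod.ext (Subtype.ext (funext fun j => ?_)) (Subtype.ext ?_)
  · simp [toPrism, atHeight, filter_eq']
  · simpa [toPrism, atHeight] using x.2.2

lemma toPrism_id_false : toPrism (id : Fin (a + 1) → _) (fun _ => False) = atHeight a 0 := by
  ext x : 1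
  refine Prod.ext (Subtype.ext (funext fun j => ?_)) (Subtype.ext ?_)
  · simp [toPrism, atHeight, filter_eq']
  · simp [toPrism, atHeight]

end SimplexT

open SimplexT

/-- The `r`-th simplex `Δ^{q+1} → Δ^q × I` of the standard triangulation of the prism. -/
noncomputable def prismMap (q : ℕ) (r : Fin (q + 1)) : C(SimplexT (q + 1), SimplexT q × I) :=
  toPrism r.predAbove (fun i => (r : ℕ) < i)

section PrismFaces

variable {q : ℕ}

lemma prismMap_comp_faceCM_of_le (r : Fin (q + 2)) (s : Fin (q + 3)) (r' : Fin (q + 1))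
    (s' : Fin (q + 2)) (hs : (s : ℕ) = s') (hr : (r : ℕ) = r' + 1) (hle : (s' : ℕ) ≤ r') :
    (prismMap (q + 1) r).comp (faceCM (q + 1) s)
      = ((faceCM q s').prodMap (ContinuousMap.id I)).comp (prismMap q r') := by
  rw [prismMap, prismMap, toPrism_comp_faceCM, faceCM_prodMap_comp_toPrism]
  refine toPrism_congr (fun k => ?_) fun k => ?_ <;>
  simp only [Function.comp_apply, Fin.ext_iff, Fin.val_predAbove_eq_ite,
    Fin.val_succAbove_eq_ite] <;> split_ifs <;> omega

lemma prismMap_comp_faceCM_of_lt (r : Fin (q + 2)) (s : Fin (q + 3)) (r' : Fin (q + 1))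
    (s' : Fin (q + 2)) (hs : (s : ℕ) = s' + 1) (hr : (r : ℕ) = r') (hlt : (r' : ℕ) < s') :
    (prismMap (q + 1) r).comp (faceCM (q + 1) s)
      = ((faceCM q s').prodMap (ContinuousMap.id I)).comp (prismMap q r') := by
  rw [prismMap, prismMap, toPrism_comp_faceCM, faceCM_prodMap_comp_toPrism]
  refine toPrism_congr (fun k => ?_) fun k => ?_ <;>
  simp only [Function.comp_apply, Fin.ext_iff, Fin.val_predAbove_eq_ite,
    Fin.val_succAbove_eq_ite] <;> split_ifs <;> omega

lemma prismMap_castSucc_comp_faceCM (t : Fin q) :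
    (prismMap q t.castSucc).comp (faceCM q t.succ.castSucc)
      = (prismMap q t.succ).comp (faceCM q t.succ.castSucc) := by
  rw [prismMap, prismMap, toPrism_comp_faceCM, toPrism_comp_faceCM]
  refine toPrism_congr (fun k => ?_) fun k => ?_ <;>
  simp only [Function.comp_apply, Fin.ext_iff, Fin.val_predAbove_eq_ite,
    Fin.val_succAbove_eq_ite, Fin.val_castSucc, Fin.val_succ] <;>
  split_ifs <;> omega

lemma prismMap_zero_comp_faceCM_zero : (prismMap q 0).comp (faceCM q 0) = atHeight q 1 := by
  rw [prismMap, toPrism_comp_faceCM, ← toPrism_id_true]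
  refine toPrism_congr (fun k => ?_) fun k => ?_ <;>
  simp only [Function.comp_apply, id, Fin.ext_iff, Fin.val_predAbove_eq_ite,
    Fin.val_succAbove_eq_ite, Fin.val_zero, Nat.not_lt_zero, if_false, iff_true] <;>
  (try split_ifs) <;> omega

lemma prismMap_last_comp_faceCM_last :
    (prismMap q (Fin.last q)).comp (faceCM q (Fin.last (q + 1))) = atHeight q 0 := by
  rw [prismMap, toPrism_comp_faceCM, ← toPrism_id_false]
  refine toPrism_congr (fun k => ?_) fun k => ?_ <;>
  simp only [Function.comp_apply, id, Fin.ext_iff, Fin.val_predAbove_eq_ite,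
    Fin.val_succAbove_eq_ite, Fin.val_last, iff_false, not_lt] <;>
  split_ifs <;> omega

end PrismFaces

section SingularChains

variable {Z : Type u} {W : Type v} [TopologicalSpace Z] [TopologicalSpace W]

abbrev SingChain (Z : Type u) [TopologicalSpace Z] : Type u := SST Z →₀ R

noncomputable def simplexBoundary : SST Z → SingChain R Z
  | ⟨0, _⟩ => 0
  | ⟨q + 1, τ⟩ =>
    ∑ r : Fin (q + 2), Finsupp.single ⟨q, τ.comp (faceCM q r)⟩ ((-1) ^ (r : ℕ))

noncomputable def chainBoundary : SingChain R Z →ₗ[R] SingChain R Z :=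
  Finsupp.lift _ R _ (simplexBoundary R)

lemma chainBoundary_single (τ : SST Z) (c : R) :
    chainBoundary R (Finsupp.single τ c) = c • simplexBoundary R τ := by
  simp [chainBoundary]

lemma simplexBoundary_of_fst_eq_zero {τ : SST Z} (h : τ.1 = 0) : simplexBoundary R τ = 0 := by
  obtain ⟨_ | _, _⟩ := τ
  · rfl
  · simp at h

def mapSST {X : Type u} {Y : Type v} [TopologicalSpace X] [TopologicalSpace Y] (φ : C(X, Y))
    (τ : SST X) : SST Y :=
  ⟨τ.1, φ.comp τ.2⟩

lemma mapSST_mk {X : Type u} {Y : Type v} [TopologicalSpace X] [TopologicalSpace Y] (φ : C(X, Y))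
    {d : ℕ} (τ : C(SimplexT d, X)) : mapSST φ ⟨d, τ⟩ = ⟨d, φ.comp τ⟩ := rfl

def homotopyAlong (K : C(Z × I, W)) {q : ℕ} (τ : C(SimplexT q, Z)) : C(SimplexT q × I, W) :=
  K.comp (τ.prodMap (ContinuousMap.id I))

noncomputable def prismSimplex (K : C(Z × I, W)) (τ : SST Z) (r : Fin (τ.1 + 1)) : SST W :=
  ⟨τ.1 + 1, (homotopyAlong K τ.2).comp (prismMap τ.1 r)⟩

noncomputable def simplexPrism (K : C(Z × I, W)) (τ : SST Z) : SingChain R W :=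
  ∑ r, Finsupp.single (prismSimplex K τ r) ((-1) ^ (r : ℕ))

noncomputable def chainPrism (K : C(Z × I, W)) : SingChain R Z →ₗ[R] SingChain R W :=
  Finsupp.lift _ R _ (simplexPrism R K)

lemma chainPrism_single (K : C(Z × I, W)) (τ : SST Z) (c : R) :
    chainPrism R K (Finsupp.single τ c) = c • simplexPrism R K τ := by
  simp [chainPrism]

noncomputable def prismEnd (K : C(Z × I, W)) (t : I) (τ : SST Z) : SST W :=
  ⟨τ.1, (homotopyAlong K τ.2).comp (atHeight τ.1 t)⟩

variable {q : ℕ}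

noncomputable def prismFace (F : C(SimplexT q × I, W)) (r : Fin (q + 1)) (s : Fin (q + 2)) :
    SingChain R W :=
  Finsupp.single ⟨q, F.comp ((prismMap q r).comp (faceCM q s))⟩ ((-1) ^ ((r : ℕ) + s))

noncomputable def facePrism (F : C(SimplexT (q + 1) × I, W)) (s : Fin (q + 2))
    (r : Fin (q + 1)) : SingChain R W :=
  Finsupp.single
    ⟨q + 1, F.comp (((faceCM q s).prodMap (ContinuousMap.id I)).comp (prismMap q r))⟩
    ((-1) ^ ((s : ℕ) + r))

/-- The faces of the `r`-th prism simplex other than its `r`-th and `(r+1)`-st. -/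
def outerFace (r : Fin (q + 1)) (k : Fin q) : Fin (q + 2) :=
  r.castSucc.succAbove (r.succAbove k)

lemma val_outerFace (r : Fin (q + 1)) (k : Fin q) :
    (outerFace r k : ℕ) = if (k : ℕ) < r then (k : ℕ) else k + 2 := by
  simp only [outerFace, Fin.val_succAbove_eq_ite, Fin.val_castSucc]
  split_ifs <;> omega

lemma chainBoundary_simplexPrism (K : C(Z × I, W)) (τ : C(SimplexT q, Z)) :
    chainBoundary R (simplexPrism R K ⟨q, τ⟩)
      = ∑ r, (prismFace R (homotopyAlong K τ) r r.castSucc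
          + prismFace R (homotopyAlong K τ) r r.succ)
        + ∑ r, ∑ k, prismFace R (homotopyAlong K τ) r (outerFace r k) := by
  rw [← sum_add_distrib, simplexPrism, map_sum]
  refine sum_congr rfl fun r _ => ?_
  rw [chainBoundary_single, prismSimplex, simplexBoundary, smul_sum,
    Fin.sum_univ_succAbove _ r.castSucc,
    Fin.sum_univ_succAbove _ r, Fin.succAbove_castSucc_self, add_assoc]
  simp only [Finsupp.smul_single, smul_eq_mul, ← pow_add, prismFace, outerFace,
    ContinuousMap.comp_assoc]

lemma sum_prismFace_inner (F : C(SimplexT q × I, W)) :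
    ∑ r, (prismFace R F r r.castSucc + prismFace R F r r.succ)
      = Finsupp.single ⟨q, F.comp (atHeight q 1)⟩ 1
        - Finsupp.single ⟨q, F.comp (atHeight q 0)⟩ 1 := by
  have hcancel (t : Fin q) :
      prismFace R F t.succ t.succ.castSucc + prismFace R F t.castSucc t.castSucc.succ = 0 := by
    rw [prismFace, prismFace, Fin.succ_castSucc, prismMap_castSucc_comp_faceCM,
      ← Finsupp.single_add, Finsupp.single_eq_zero]
    simp only [Fin.val_succ, Fin.val_castSucc, pow_add, pow_one]
    ring
  have hfirst :
      prismFace R F 0 (Fin.castSucc 0) = Finsupp.single ⟨q, F.comp (atHeight q 1)⟩ 1 := by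
    rw [prismFace, Fin.castSucc_zero, prismMap_zero_comp_faceCM_zero]
    simp
  have hlast : prismFace R F (Fin.last q) (Fin.last q).succ
      = -Finsupp.single ⟨q, F.comp (atHeight q 0)⟩ 1 := by
    rw [prismFace, Fin.succ_last, prismMap_last_comp_faceCM_last, ← Finsupp.single_neg]
    simp
  rw [sum_add_distrib, Fin.sum_univ_succ, Fin.sum_univ_castSucc (fun r => prismFace R F r r.succ),
    hfirst, hlast, ← sub_eq_zero]
  calc _ = ∑ t : Fin q, (prismFace R F t.succ t.succ.castSucc
        + prismFace R F t.castSucc t.castSucc.succ) := by rw [sum_add_distrib]; abel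
    _ = 0 := sum_eq_zero fun t _ => hcancel t

/-- Matches the outer faces of the prism simplices with the prism simplices over the faces. -/
def outerFaceEquiv (q : ℕ) : Fin (q + 2) × Fin (q + 1) ≃ Fin (q + 2) × Fin (q + 1) where
  toFun p := if h : (p.2 : ℕ) < p.1 then (⟨p.2, by omega⟩, ⟨(p.1 : ℕ) - 1, by omega⟩)
    else (⟨(p.2 : ℕ) + 1, by omega⟩, ⟨p.1, by omega⟩)
  invFun p := if h : (p.1 : ℕ) ≤ p.2 then (⟨(p.2 : ℕ) + 1, by omega⟩, ⟨p.1, by omega⟩)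
    else (⟨p.2, by omega⟩, ⟨(p.1 : ℕ) - 1, by omega⟩)
  left_inv p := by
    dsimp only
    by_cases h : (p.2 : ℕ) < p.1
    · rw [dif_pos h, dif_pos (by dsimp only; omega)]
      ext <;> simp; omega
    · rw [dif_neg h, dif_neg (by dsimp only; omega)]
      ext <;> simp
  right_inv p := by
    dsimp only
    by_cases h : (p.1 : ℕ) ≤ p.2
    · rw [dif_pos h, dif_pos (by dsimp only; omega)]
      ext <;> simp
    · rw [dif_neg h, dif_neg (by dsimp only; omega)]
      ext <;> simp; omega

lemma prismFace_outerFace (F : C(SimplexT (q + 1) × I, W)) (p : Fin (q + 2) × Fin (q + 1)) :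
    prismFace R F p.1 (outerFace p.1 p.2)
      = -facePrism R F (outerFaceEquiv q p).1 (outerFaceEquiv q p).2 := by
  obtain ⟨r, k⟩ := p
  have hs := val_outerFace r k
  rw [prismFace, facePrism, ← Finsupp.single_neg]
  by_cases h : (k : ℕ) < r
  · simp only [outerFaceEquiv, Equiv.coe_fn_mk, dif_pos h]
    rw [if_pos h] at hs
    rw [prismMap_comp_faceCM_of_le r _ ⟨(r : ℕ) - 1, by omega⟩ ⟨k, by omega⟩ hs
      (by simp; omega) (by simp; omega), hs]
    congr 1
    rw [show (r : ℕ) + k = k + (r - 1) + 1 by omega, pow_succ, mul_neg_one]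
  · simp only [outerFaceEquiv, Equiv.coe_fn_mk, dif_neg h]
    rw [if_neg h] at hs
    rw [prismMap_comp_faceCM_of_lt r _ ⟨r, by omega⟩ ⟨(k : ℕ) + 1, by omega⟩ hs rfl
      (by simp; omega), hs]
    congr 1
    rw [show (r : ℕ) + (k + 2) = k + 1 + r + 1 by omega, pow_succ, mul_neg_one]

lemma chainPrism_simplexBoundary (K : C(Z × I, W)) (τ : C(SimplexT q, Z)) :
    chainPrism R K (simplexBoundary R ⟨q, τ⟩)
      = -∑ r, ∑ k, prismFace R (homotopyAlong K τ) r (outerFace r k) := by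
  cases q with
  | zero => simp [simplexBoundary]
  | succ q =>
    rw [← Fintype.sum_prod_type', Fintype.sum_equiv (outerFaceEquiv q) _
      (fun p => -facePrism R _ p.1 p.2) (prismFace_outerFace R _), sum_neg_distrib, neg_neg,
      Fintype.sum_prod_type', simplexBoundary, map_sum]
    refine sum_congr rfl fun s _ => ?_
    rw [chainPrism_single, simplexPrism, smul_sum]
    refine sum_congr rfl fun r _ => ?_
    simp only [Finsupp.smul_single, smul_eq_mul, ← pow_add, facePrism]
    rfl

lemma chainBoundary_simplexPrism_add_chainPrism_simplexBoundary (K : C(Z × I, W)) (τ : SST Z) :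
    chainBoundary R (simplexPrism R K τ) + chainPrism R K (simplexBoundary R τ)
      = Finsupp.single (prismEnd K 1 τ) 1 - Finsupp.single (prismEnd K 0 τ) 1 := by
  obtain ⟨q, τ⟩ := τ
  rw [chainBoundary_simplexPrism, chainPrism_simplexBoundary, add_neg_cancel_right,
    sum_prismFace_inner]
  rfl

end SingularChains

section TupleChains

variable {A : InterSp.{u} n} {B : InterSp.{v} n}

lemma TupF.ext {t t' : TupF A} (h : ∀ k, t k = t' k) : t = t' := funext h

/-- `Function.update` on `TupF`, which is not reducibly a Pi type. -/
def setSlot (t : TupF A) (i : Fin n) (u : SST (A.C i)) : TupF A :=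
  Function.update t i u

section SetSlot

variable (t : TupF A) {i : Fin n} (u : SST (A.C i))

@[simp] lemma setSlot_apply_self : setSlot t i u i = u :=
  Function.update_self (β := fun i => SST (A.C i)) i u t

lemma setSlot_apply_of_ne {k : Fin n} (hk : k ≠ i) : setSlot t i u k = t k :=
  Function.update_of_ne (β := fun i => SST (A.C i)) hk u t

lemma setSlot_setSlot_self : setSlot (setSlot t i u) i = setSlot t i :=
  funext fun v => Function.update_idem (β := fun i => SST (A.C i)) u v t

lemma setSlot_comm {j : Fin n} (hij : i ≠ j) (v : SST (A.C j)) :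
    setSlot (setSlot t i u) j v = setSlot (setSlot t j v) i u :=
  Function.update_comm (β := fun i => SST (A.C i)) hij u v t

lemma setSlot_self : setSlot t i (t i) = t :=
  Function.update_eq_self (β := fun i => SST (A.C i)) i t

end SetSlot

abbrev TupChain (A : InterSp.{u} n) : Type u := TupF A →₀ R

/-- The Koszul sign of the `i`-th factor of a tensor of simplices is `(-1) ^ degBefore t i`. -/
def degBefore (t : TupF A) (i : Fin n) : ℕ :=
  ∑ k ∈ univ.filter (fun k : Fin n => (k : ℕ) < (i : ℕ)), (t k).1

lemma degBefore_setSlot_of_le {t : TupF A} {i j : Fin n} (u : SST (A.C j))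
    (hij : (i : ℕ) ≤ j) : degBefore (setSlot t j u) i = degBefore t i := by
  refine sum_congr rfl fun k hk => ?_
  rw [setSlot_apply_of_ne]
  rintro rfl
  simp at hk
  omega

lemma degBefore_setSlot_of_lt {t : TupF A} {i j : Fin n} (u : SST (A.C j))
    (hji : (j : ℕ) < i) : degBefore (setSlot t j u) i + (t j).1 = degBefore t i + u.1 := by
  have hj : j ∈ univ.filter (fun k : Fin n => (k : ℕ) < (i : ℕ)) := by simpa using hji
  rw [degBefore, degBefore, ← add_sum_erase _ _ hj, ← add_sum_erase _ _ hj,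
    setSlot_apply_self,
    sum_congr rfl fun k hk => by rw [setSlot_apply_of_ne _ _ (ne_of_mem_erase hk)]]
  ring

lemma degT_setSlot (t : TupF A) (i : Fin n) (u : SST (A.C i)) :
    degT (setSlot t i u) + (t i).1 = degT t + u.1 := by
  rw [degT, degT, ← add_sum_erase _ _ (mem_univ i), ← add_sum_erase _ _ (mem_univ i),
    setSlot_apply_self,
    sum_congr rfl fun k hk => by rw [setSlot_apply_of_ne _ _ (ne_of_mem_erase hk)]]
  ring

noncomputable def insertAt (t : TupF A) (i : Fin n) : SingChain R (A.C i) →ₗ[R] TupChain R A :=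
  Finsupp.lmapDomain R R (setSlot t i)

lemma insertAt_single (t : TupF A) (i : Fin n) (u : SST (A.C i)) (c : R) :
    insertAt R t i (Finsupp.single u c) = Finsupp.single (setSlot t i u) c :=
  Finsupp.mapDomain_single

lemma insertAt_setSlot_self (t : TupF A) (i : Fin n) (u : SST (A.C i)) :
    insertAt R (setSlot t i u) i = insertAt R t i := by
  simp only [insertAt, setSlot_setSlot_self]

noncomputable def slotBoundary (j : Fin n) : TupChain R A →ₗ[R] TupChain R A :=
  Finsupp.lift _ R _ fun t => (-1 : R) ^ degBefore t j • insertAt R t j (simplexBoundary R (t j))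

lemma slotBoundary_single (j : Fin n) (t : TupF A) (c : R) :
    slotBoundary R j (Finsupp.single t c)
      = (c * (-1 : R) ^ degBefore t j) • insertAt R t j (simplexBoundary R (t j)) := by
  simp only [slotBoundary, Finsupp.lift_apply, zero_smul, Finsupp.sum_single_index, mul_smul]

lemma slotBoundary_single_of_fst_eq_zero {j : Fin n} {t : TupF A} (ht : (t j).1 = 0) (c : R) :
    slotBoundary R j (Finsupp.single t c) = 0 := by
  rw [slotBoundary_single, simplexBoundary_of_fst_eq_zero R ht, map_zero, smul_zero]

lemma slotBoundary_single_of_eq {j : Fin n} {t : TupF A} {d : ℕ} {τ : C(SimplexT (d + 1), A.C j)}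
    (ht : t j = ⟨d + 1, τ⟩) (c : R) :
    slotBoundary R j (Finsupp.single t c) = ∑ s : Fin (d + 2),
      Finsupp.single (setSlot t j ⟨d, τ.comp (faceCM d s)⟩)
        (c * (-1 : R) ^ (degBefore t j + s)) := by
  rw [slotBoundary_single, ht, simplexBoundary, map_sum, smul_sum]
  simp only [insertAt_single, Finsupp.smul_single, smul_eq_mul, pow_add, mul_assoc]

lemma slotBoundary_insertAt (i : Fin n) (t : TupF A) (z : SingChain R (A.C i)) :
    slotBoundary R i (insertAt R t i z)
      = (-1 : R) ^ degBefore t i • insertAt R t i (chainBoundary R z) := by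
  induction z using Finsupp.induction_linear with
  | zero => simp
  | add x y hx hy => simp [map_add, hx, hy, smul_add]
  | single u c =>
    rw [insertAt_single, slotBoundary_single, setSlot_apply_self,
      degBefore_setSlot_of_le _ le_rfl, insertAt_setSlot_self, chainBoundary_single, map_smul,
      mul_comm, mul_smul]

def mixTup (f g : InterSp.Mor A B) (c : ℕ) (t : TupF A) : TupF B :=
  fun k => mapSST (if (k : ℕ) < c then f.f k else g.f k) (t k)

variable {f g : InterSp.Mor A B}

lemma mixTup_apply (c : ℕ) (t : TupF A) (k : Fin n) :
    mixTup f g c t k = mapSST (if (k : ℕ) < c then f.f k else g.f k) (t k) := rfl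

lemma degBefore_mixTup (c : ℕ) (t : TupF A) (i : Fin n) :
    degBefore (mixTup f g c t) i = degBefore t i := rfl

lemma mixTup_setSlot (c : ℕ) (t : TupF A) (j : Fin n) (u : SST (A.C j)) :
    mixTup f g c (setSlot t j u)
      = setSlot (mixTup f g c t) j (mapSST (if (j : ℕ) < c then f.f j else g.f j) u) := by
  refine TupF.ext fun k => ?_
  rcases eq_or_ne k j with rfl | hk
  · simp only [mixTup_apply, setSlot_apply_self]
  · simp only [mixTup_apply, setSlot_apply_of_ne _ _ hk]

noncomputable def slotPrism (h : InterSp.FHtpy f g) (i : Fin n) :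
    TupChain R A →ₗ[R] TupChain R B :=
  Finsupp.lift _ R _ fun t =>
    (-1 : R) ^ degBefore t i • insertAt R (mixTup f g i t) i (simplexPrism R (h.H i) (t i))

variable (h : InterSp.FHtpy f g)

lemma slotPrism_single (i : Fin n) (t : TupF A) (c : R) :
    slotPrism R h i (Finsupp.single t c)
      = (c * (-1 : R) ^ degBefore t i)
        • insertAt R (mixTup f g i t) i (simplexPrism R (h.H i) (t i)) := by
  simp only [slotPrism, Finsupp.lift_apply, zero_smul, Finsupp.sum_single_index, mul_smul]

lemma slotPrism_single_of_eq {i : Fin n} {t : TupF A} {τ : SST (A.C i)} (ht : t i = τ) (c : R) :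
    slotPrism R h i (Finsupp.single t c) = ∑ r, Finsupp.single
      (setSlot (mixTup f g i t) i (prismSimplex (h.H i) τ r))
      (c * (-1 : R) ^ (degBefore t i + r)) := by
  rw [slotPrism_single, ht, simplexPrism, map_sum, smul_sum]
  simp only [insertAt_single, Finsupp.smul_single, smul_eq_mul, pow_add, mul_assoc]

lemma slotPrism_insertAt (i : Fin n) (t : TupF A) (z : SingChain R (A.C i)) :
    slotPrism R h i (insertAt R t i z)
      = (-1 : R) ^ degBefore t i • insertAt R (mixTup f g i t) i (chainPrism R (h.H i) z) := by
  induction z using Finsupp.induction_linear with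
  | zero => simp
  | add x y hx hy => simp [map_add, hx, hy, smul_add]
  | single u c =>
    rw [insertAt_single, slotPrism_single, setSlot_apply_self, degBefore_setSlot_of_le _ le_rfl,
      mixTup_setSlot, insertAt_setSlot_self, chainPrism_single, map_smul, mul_comm, mul_smul]

lemma prismEnd_zero (i : Fin n) (τ : SST (A.C i)) : prismEnd (h.H i) 0 τ = mapSST (f.f i) τ := by
  simp only [prismEnd, mapSST]
  congr
  ext x
  exact congrArg Subtype.val (h.h0 i (τ.2 x))

lemma prismEnd_one (i : Fin n) (τ : SST (A.C i)) : prismEnd (h.H i) 1 τ = mapSST (g.f i) τ := by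
  simp only [prismEnd, mapSST]
  congr
  ext x
  exact congrArg Subtype.val (h.h1 i (τ.2 x))

lemma setSlot_mixTup_prismEnd_one (i : Fin n) (t : TupF A) :
    setSlot (mixTup f g i t) i (prismEnd (h.H i) 1 (t i)) = mixTup f g i t := by
  rw [prismEnd_one, show mapSST (g.f i) (t i) = mixTup f g i t i by simp [mixTup_apply],
    setSlot_self]

lemma setSlot_mixTup_prismEnd_zero (i : Fin n) (t : TupF A) :
    setSlot (mixTup f g i t) i (prismEnd (h.H i) 0 (t i)) = mixTup f g (i + 1) t := by
  refine TupF.ext fun k => ?_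
  rcases eq_or_ne k i with rfl | hk
  · simp [prismEnd_zero, mixTup_apply]
  · have : (k : ℕ) ≠ i := Fin.val_ne_of_ne hk
    rw [setSlot_apply_of_ne _ _ hk, mixTup_apply, mixTup_apply]
    congr 2
    exact propext (by omega)

lemma slotBoundary_slotPrism_add_slotPrism_slotBoundary (i : Fin n) (t : TupF A) :
    slotBoundary R i (slotPrism R h i (Finsupp.single t 1))
        + slotPrism R h i (slotBoundary R i (Finsupp.single t 1))
      = Finsupp.single (mixTup f g i t) 1 - Finsupp.single (mixTup f g (i + 1) t) 1 := by
  have hsq : (-1 : R) ^ degBefore t i * (-1) ^ degBefore t i = 1 := by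
    rw [← pow_add, Even.neg_one_pow ⟨_, rfl⟩]
  rw [slotPrism_single, slotBoundary_single, one_mul, map_smul, map_smul,
    slotBoundary_insertAt, degBefore_mixTup, slotPrism_insertAt, smul_smul, smul_smul, hsq,
    one_smul, one_smul, ← map_add,
    chainBoundary_simplexPrism_add_chainPrism_simplexBoundary, map_sub, insertAt_single,
    insertAt_single, setSlot_mixTup_prismEnd_one, setSlot_mixTup_prismEnd_zero]

/-- The sign exponents of `∂ⱼ ∘ Pᵢ` and `Pᵢ ∘ ∂ⱼ` differ by one, so `∂ⱼ` and `Pᵢ` anticommute. -/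
lemma degBefore_add_degBefore_setSlot {t : TupF A} {T : TupF B} (hT : ∀ k, (T k).1 = (t k).1)
    {i j : Fin n} (hij : j ≠ i) (u : SST (A.C j)) (hu : u.1 + 1 = (t j).1) (v : SST (B.C i))
    (hv : v.1 = (t i).1 + 1) :
    degBefore t i + degBefore (setSlot T i v) j
      = degBefore t j + degBefore (setSlot t j u) i + 1 := by
  have hTdeg (k : Fin n) : degBefore T k = degBefore t k := sum_congr rfl fun l _ => hT l
  rcases lt_or_gt_of_ne (Fin.val_ne_of_ne hij) with hji | hij'
  · have := degBefore_setSlot_of_lt (t := t) u hji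
    rw [degBefore_setSlot_of_le _ hji.le, hTdeg]
    omega
  · have := degBefore_setSlot_of_lt (t := T) v hij'
    rw [degBefore_setSlot_of_le _ hij'.le]
    rw [hTdeg, hT] at this
    omega

lemma neg_one_pow_add_neg_one_pow_of_eq_succ {a b : ℕ} (hab : a = b + 1) :
    (-1 : R) ^ a + (-1) ^ b = 0 := by
  rw [hab, pow_succ, mul_neg_one, neg_add_cancel]

lemma slotBoundary_slotPrism_add_slotPrism_slotBoundary_of_ne {i j : Fin n} (hij : j ≠ i)
    (t : TupF A) :
    slotBoundary R j (slotPrism R h i (Finsupp.single t 1))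
      + slotPrism R h i (slotBoundary R j (Finsupp.single t 1)) = 0 := by
  obtain ⟨φ, hφ⟩ : ∃ φ, (if (j : ℕ) < i then f.f j else g.f j) = φ := ⟨_, rfl⟩
  have hmix (r) :
      setSlot (mixTup f g i t) i (prismSimplex (h.H i) (t i) r) j = mapSST φ (t j) := by
    rw [setSlot_apply_of_ne _ _ hij, mixTup_apply, hφ]
  rcases htj : t j with ⟨_ | d, τ⟩
  · rw [slotBoundary_single_of_fst_eq_zero R (by rw [htj]), map_zero, add_zero,
      slotPrism_single_of_eq R h rfl, map_sum]
    exact sum_eq_zero fun r _ => slotBoundary_single_of_fst_eq_zero R (by rw [hmix, htj]; rfl) _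
  have h₁ : slotBoundary R j (slotPrism R h i (Finsupp.single t 1)) = ∑ r, ∑ s : Fin (d + 2),
      Finsupp.single (setSlot (setSlot (mixTup f g i t) i (prismSimplex (h.H i) (t i) r)) j
          ⟨d, (φ.comp τ).comp (faceCM d s)⟩)
        (1 * (-1 : R) ^ (degBefore t i + r) * (-1) ^
          (degBefore (setSlot (mixTup f g i t) i (prismSimplex (h.H i) (t i) r)) j + s)) := by
    rw [slotPrism_single_of_eq R h rfl, map_sum]
    exact sum_congr rfl fun r _ => slotBoundary_single_of_eq R (by rw [hmix, htj]; rfl) _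
  have h₂ : slotPrism R h i (slotBoundary R j (Finsupp.single t 1)) = ∑ s : Fin (d + 2), ∑ r,
      Finsupp.single
        (setSlot (mixTup f g i (setSlot t j ⟨d, τ.comp (faceCM d s)⟩)) i
          (prismSimplex (h.H i) (t i) r))
        (1 * (-1 : R) ^ (degBefore t j + s) * (-1) ^
          (degBefore (setSlot t j ⟨d, τ.comp (faceCM d s)⟩) i + r)) := by
    rw [slotBoundary_single_of_eq R htj, map_sum]
    exact sum_congr rfl fun s _ =>
      slotPrism_single_of_eq R h (setSlot_apply_of_ne _ _ hij.symm) _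
  rw [h₁, h₂, sum_comm (s := univ (α := Fin (d + 2))), ← sum_add_distrib]
  refine sum_eq_zero fun r _ => ?_
  rw [← sum_add_distrib]
  refine sum_eq_zero fun s _ => ?_
  rw [mixTup_setSlot, hφ, setSlot_comm _ _ hij.symm, mapSST_mk, ContinuousMap.comp_assoc,
    ← Finsupp.single_add, Finsupp.single_eq_zero]
  have := degBefore_add_degBefore_setSlot (t := t) (T := mixTup f g i t) (fun _ => rfl) hij
    ⟨d, τ.comp (faceCM d s)⟩ (by rw [htj]) (prismSimplex (h.H i) (t i) r) rfl
  simp only [one_mul, ← pow_add]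
  exact neg_one_pow_add_neg_one_pow_of_eq_succ R (by omega)

noncomputable def tupBoundary : TupChain R A →ₗ[R] TupChain R A := ∑ j, slotBoundary R j

noncomputable def tupPrism : TupChain R A →ₗ[R] TupChain R B := ∑ i, slotPrism R h i

def mapTup (f : InterSp.Mor A B) (t : TupF A) : TupF B := fun k => mapSST (f.f k) (t k)

noncomputable def tupMap (f : InterSp.Mor A B) : TupChain R A →ₗ[R] TupChain R B :=
  Finsupp.lmapDomain R R (mapTup f)

lemma mixTup_zero (t : TupF A) : mixTup f g 0 t = mapTup g t := rfl

lemma mixTup_of_le {c : ℕ} (hc : n ≤ c) (t : TupF A) : mixTup f g c t = mapTup f t :=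
  TupF.ext fun k => by simp [mixTup_apply, mapTup, k.2.trans_le hc]

lemma tupBoundary_tupPrism_add_tupPrism_tupBoundary :
    tupBoundary R ∘ₗ tupPrism R h + tupPrism R h ∘ₗ tupBoundary R
      = tupMap R g - tupMap R f := by
  refine Finsupp.lhom_ext' fun t => LinearMap.ext_ring ?_
  have hdiag (i : Fin n) : ∑ j, (slotBoundary R j (slotPrism R h i (Finsupp.single t 1))
      + slotPrism R h i (slotBoundary R j (Finsupp.single t 1)))
      = Finsupp.single (mixTup f g i t) 1 - Finsupp.single (mixTup f g (i + 1) t) 1 := by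
    rw [sum_eq_single i fun j _ hji =>
      slotBoundary_slotPrism_add_slotPrism_slotBoundary_of_ne R h hji t]
    · exact slotBoundary_slotPrism_add_slotPrism_slotBoundary R h i t
    · simp
  simp only [LinearMap.add_apply, LinearMap.comp_apply, Finsupp.lsingle_apply, tupBoundary,
    tupPrism, LinearMap.sum_apply, map_sum, LinearMap.sub_apply, tupMap,
    Finsupp.lmapDomain_apply, Finsupp.mapDomain_single]
  rw [sum_comm (f := fun j i => slotPrism R h i (slotBoundary R j (Finsupp.single t 1))),
    ← sum_add_distrib, sum_congr rfl fun i _ => sum_add_distrib.symm,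
    sum_congr rfl fun i _ => hdiag i,
    Fin.sum_univ_eq_sum_range (fun c => Finsupp.single (mixTup f g c t) (1 : R)
      - Finsupp.single (mixTup f g (c + 1) t) 1), sum_range_sub', mixTup_zero, mixTup_of_le le_rfl]

lemma tupBoundary_tupPrism_add_tupPrism_tupBoundary_apply (y : TupChain R A) :
    tupBoundary R (tupPrism R h y) + tupPrism R h (tupBoundary R y) = tupMap R g y - tupMap R f y :=
  LinearMap.congr_fun (tupBoundary_tupPrism_add_tupPrism_tupBoundary R h) y

end TupleChains

section Graded

variable {A : InterSp.{u} n} {B : InterSp.{v} n}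

noncomputable def forgetDeg (A : InterSp.{u} n) (p : ℕ) : Ch R A p →ₗ[R] TupChain R A :=
  Finsupp.lmapDomain R R Subtype.val

variable {p : ℕ}

lemma forgetDeg_injective : Function.Injective (forgetDeg R A p) :=
  Finsupp.mapDomain_injective Subtype.val_injective

lemma forgetDeg_single (sg : Tup A p) (c : R) :
    forgetDeg R A p (Finsupp.single sg c) = Finsupp.single sg.1 c :=
  Finsupp.mapDomain_single

lemma forgetDeg_chMap (f : InterSp.Mor A B) (x : Ch R A p) :
    forgetDeg R B p (chMap R f p x) = tupMap R f (forgetDeg R A p x) := by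
  refine LinearMap.congr_fun (Finsupp.lhom_ext fun sg c => ?_ :
    forgetDeg R B p ∘ₗ chMap R f p = tupMap R f ∘ₗ forgetDeg R A p) x
  simp only [LinearMap.comp_apply, chMap, Finsupp.lift_apply, zero_smul, Finsupp.sum_single_index,
    map_smul, forgetDeg_single, tupMap, Finsupp.lmapDomain_apply, Finsupp.mapDomain_single]
  exact (congrArg (c • ·) (forgetDeg_single R _ 1)).trans (Finsupp.smul_single_one _ _)

lemma forgetDeg_dTerm (sg : Tup A (p + 1)) (i : Fin n) :
    forgetDeg R A p (dTerm R sg i) = slotBoundary R i (Finsupp.single sg.1 1) := by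
  unfold dTerm
  split
  next τ hτ => rw [map_zero, slotBoundary_single_of_fst_eq_zero R (by rw [hτ])]
  next d τ hτ =>
    rw [slotBoundary_single_of_eq R hτ, map_sum]
    refine sum_congr rfl fun s _ => ?_
    refine (forgetDeg_single R _ _).trans ?_
    rw [one_mul]
    push_cast
    rfl

lemma forgetDeg_dCh (x : Ch R A (p + 1)) :
    forgetDeg R A p (dCh R A p x) = tupBoundary R (forgetDeg R A (p + 1) x) := by
  refine LinearMap.congr_fun (Finsupp.lhom_ext' fun sg => LinearMap.ext_ring ?_ :
    forgetDeg R A p ∘ₗ dCh R A p = tupBoundary R ∘ₗ forgetDeg R A (p + 1)) x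
  simp only [LinearMap.comp_apply, Finsupp.lsingle_apply, dCh, Finsupp.lift_apply, zero_smul,
    Finsupp.sum_single_index, one_smul, map_sum, forgetDeg_dTerm, forgetDeg_single, tupBoundary,
    LinearMap.sum_apply]

lemma tupBoundary_forgetDeg_zero (x : Ch R A 0) : tupBoundary R (forgetDeg R A 0 x) = 0 := by
  induction x using Finsupp.induction_linear with
  | zero => simp
  | add a b ha hb => rw [map_add, map_add, ha, hb, add_zero]
  | single sg c =>
    rw [forgetDeg_single, tupBoundary, LinearMap.sum_apply]
    exact sum_eq_zero fun j _ => slotBoundary_single_of_fst_eq_zero R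
      (sum_eq_zero_iff.1 sg.2 j (mem_univ j)) c

variable {f g : InterSp.Mor A B} (h : InterSp.FHtpy f g)

lemma degT_setSlot_mixTup_prismSimplex (t : TupF A) (i : Fin n) (r : Fin ((t i).1 + 1)) :
    degT (setSlot (mixTup f g i t) i (prismSimplex (h.H i) (t i) r)) = degT t + 1 := by
  have := degT_setSlot (mixTup f g i t) i (prismSimplex (h.H i) (t i) r)
  change _ + (t i).1 = degT t + ((t i).1 + 1) at this
  omega

noncomputable def prismTup (i : Fin n) (sg : Tup A p) (r : Fin ((sg.1 i).1 + 1)) : Tup B (p + 1) :=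
  ⟨setSlot (mixTup f g i sg.1) i (prismSimplex (h.H i) (sg.1 i) r),
    (degT_setSlot_mixTup_prismSimplex h sg.1 i r).trans (congrArg (· + 1) sg.2)⟩

noncomputable def prismCh (p : ℕ) : Ch R A p →ₗ[R] Ch R B (p + 1) :=
  Finsupp.lift _ R _ fun sg =>
    ∑ i, ∑ r, Finsupp.single (prismTup h i sg r) ((-1 : R) ^ (degBefore sg.1 i + r))

lemma forgetDeg_prismCh (x : Ch R A p) :
    forgetDeg R B (p + 1) (prismCh R h p x) = tupPrism R h (forgetDeg R A p x) := by
  refine LinearMap.congr_fun (Finsupp.lhom_ext' fun sg => LinearMap.ext_ring ?_ :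
    forgetDeg R B (p + 1) ∘ₗ prismCh R h p = tupPrism R h ∘ₗ forgetDeg R A p) x
  simp only [LinearMap.comp_apply, Finsupp.lsingle_apply, prismCh, Finsupp.lift_apply, zero_smul,
    Finsupp.sum_single_index, one_smul, map_sum, forgetDeg_single, tupPrism, LinearMap.sum_apply]
  refine sum_congr rfl fun i _ => ?_
  rw [slotPrism_single_of_eq R h rfl]
  refine sum_congr rfl fun r _ => ?_
  rw [one_mul]
  rfl

lemma range_setSlot_mixTup_prismSimplex_subset (t : TupF A) (i : Fin n) (r : Fin ((t i).1 + 1))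
    (k : Fin n) : Set.range (setSlot (mixTup f g i t) i (prismSimplex (h.H i) (t i) r) k).2
      ⊆ {w | ∃ x ∈ Set.range (t k).2, ∃ s, h.H k (x, s) = w} := by
  rcases eq_or_ne k i with rfl | hk
  · rw [setSlot_apply_self]
    rintro _ ⟨y, rfl⟩
    exact ⟨_, ⟨(prismMap _ r y).1, rfl⟩, (prismMap _ r y).2, rfl⟩
  · rw [setSlot_apply_of_ne _ _ hk, mixTup_apply]
    rintro _ ⟨y, rfl⟩
    refine ⟨_, ⟨y, rfl⟩, ?_⟩
    by_cases hki : (k : ℕ) < i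
    · rw [if_pos hki]
      exact ⟨0, h.h0 k _⟩
    · rw [if_neg hki]
      exact ⟨1, h.h1 k _⟩

/-- Since the homotopy is a morphism of interaction spaces at every time, a common point of the
slots of a prism tuple comes from a common point of the slots of the original tuple. -/
lemma interEmpty_setSlot_mixTup_prismSimplex {t : TupF A} (ht : interEmpty t) (i : Fin n)
    (r : Fin ((t i).1 + 1)) :
    interEmpty (setSlot (mixTup f g i t) i (prismSimplex (h.H i) (t i) r)) := by
  refine Set.eq_empty_iff_forall_notMem.2 fun w hw => ?_
  have hpre (k : Fin n) : ∃ x ∈ Set.range (t k).2, ∃ s, (h.H k (x, s) : B.X) = w := by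
    obtain ⟨b, hb, rfl⟩ := Set.mem_iInter.1 hw k
    obtain ⟨x, hx, s, rfl⟩ := range_setSlot_mixTup_prismSimplex_subset h t i r k hb
    exact ⟨x, hx, s, rfl⟩
  choose x hx s hs using hpre
  refine Set.eq_empty_iff_forall_notMem.1 ht (x i) (Set.mem_iInter.2 fun k => ?_)
  rcases eq_or_ne k i with rfl | hk
  · exact ⟨x k, hx k, rfl⟩
  · exact ⟨x k, hx k,
      ((h.cond i k hk.symm (x i) (x k) (s i) (s k)).1 ((hs i).trans (hs k).symm)).symm⟩

lemma prismCh_mem_Tsub {x : Ch R A p} (hx : x ∈ Tsub R A p) :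
    prismCh R h p x ∈ Tsub R B (p + 1) := by
  suffices Tsub R A p ≤ (Tsub R B (p + 1)).comap (prismCh R h p) from this hx
  refine Submodule.span_le.2 ?_
  rintro _ ⟨sg, hsg, rfl⟩
  simp only [SetLike.mem_coe, Submodule.mem_comap, prismCh, Finsupp.lift_apply, zero_smul,
    Finsupp.sum_single_index, one_smul]
  refine Submodule.sum_mem _ fun i _ => Submodule.sum_mem _ fun r _ => ?_
  rw [← mul_one ((-1 : R) ^ _), ← smul_eq_mul, ← Finsupp.smul_single]
  exact Submodule.smul_mem _ _
    (Submodule.subset_span ⟨_, interEmpty_setSlot_mixTup_prismSimplex h hsg i r, rfl⟩)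

lemma chMap_sub_chMap_add_dCh_prismCh_zero (x : Ch R A 0) :
    chMap R f 0 x - chMap R g 0 x + dCh R B 0 (prismCh R h 0 x) = 0 := by
  apply forgetDeg_injective R
  have := tupBoundary_tupPrism_add_tupPrism_tupBoundary_apply R h (forgetDeg R A 0 x)
  rw [tupBoundary_forgetDeg_zero, map_zero, add_zero] at this
  rw [map_zero, map_add, map_sub, forgetDeg_chMap, forgetDeg_chMap, forgetDeg_dCh,
    forgetDeg_prismCh, this]
  abel

lemma chMap_sub_chMap_add_dCh_prismCh_succ (x : Ch R A (p + 1)) :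
    chMap R f (p + 1) x - chMap R g (p + 1) x + dCh R B (p + 1) (prismCh R h (p + 1) x)
      = -prismCh R h p (dCh R A p x) := by
  apply forgetDeg_injective R
  have := tupBoundary_tupPrism_add_tupPrism_tupBoundary_apply R h (forgetDeg R A (p + 1) x)
  rw [map_add, map_sub, forgetDeg_chMap, forgetDeg_chMap, forgetDeg_dCh, forgetDeg_prismCh, map_neg,
    forgetDeg_prismCh, forgetDeg_dCh, eq_sub_of_add_eq this]
  abel

end Graded

/-- Equality of the classes of `a` and `b` in `H_p(IS₋({Yᵢ}))`. -/
def HomologousModT (B : InterSp.{v} n) (p : ℕ) (a b : Ch R B p) : Prop :=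
  ∃ y : Ch R B (p + 1), a - b - dCh R B p y ∈ Tsub R B p

section Homologous

variable {B : InterSp.{v} n} {p : ℕ}

lemma HomologousModT.refl (a : Ch R B p) : HomologousModT R B p a a :=
  ⟨0, by simp⟩

lemma HomologousModT.trans {a b c : Ch R B p} (hab : HomologousModT R B p a b)
    (hbc : HomologousModT R B p b c) : HomologousModT R B p a c := by
  obtain ⟨y, hy⟩ := hab
  obtain ⟨z, hz⟩ := hbc
  refine ⟨y + z, ?_⟩
  convert Submodule.add_mem _ hy hz using 1
  rw [map_add]
  abel

end Homologous

lemma homologousModT_chMap_of_fHtpy {A : InterSp.{u} n} {B : InterSp.{v} n} {f g : InterSp.Mor A B}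
    (h : InterSp.FHtpy f g) {p : ℕ} {x : Ch R A p} (hx : dFrom R A p x ∈ Tsub R A (p - 1)) :
    HomologousModT R B p (chMap R f p x) (chMap R g p x) := by
  refine ⟨-prismCh R h p x, ?_⟩
  rw [map_neg, sub_neg_eq_add]
  cases p with
  | zero =>
    rw [chMap_sub_chMap_add_dCh_prismCh_zero]
    exact zero_mem _
  | succ p =>
    rw [chMap_sub_chMap_add_dCh_prismCh_succ]
    exact neg_mem (prismCh_mem_Tsub R h hx)

/-- homotopic morphisms of interaction spaces induce equal maps
on interaction singular homology: every cycle of `IS₋({Xᵢ})` (a chain whose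
boundary lies in `T₋`) is sent by `f^♯` and `g^♯` to chains that differ by a
boundary, modulo `T₋({Yᵢ})`. -/
theorem stmt14 {A B : InterSp n} (f g : InterSp.Mor A B)
    (h : InterSp.Homotopic f g) (p : ℕ) :
    ∀ x : Ch R A p, dFrom R A p x ∈ Tsub R A (p - 1) →
      ∃ y : Ch R B (p + 1),
        chMap R f p x - chMap R g p x - dCh R B p y ∈ Tsub R B p := by
  intro x hx
  induction h with
  | refl => exact HomologousModT.refl R _
  | tail _ hstep ih =>
    exact HomologousModT.trans R ih (homologousModT_chMap_of_fHtpy R hstep.some hx)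
end

section
/- For an interaction simplicial complex (K, {K_i}) with n subcomplexes, the submodule D_*({K_i}) of ⊗_{i=1}^n C_*(K_i) generated by elementary tensors σ_1⊗⋯⊗σ_n of simplices with ⋂_i σ_i = ∅ is a subchain complex of the tensor product chain complex. -/
universe u

/-- An abstract simplicial complex on a vertex set `V`. -/
structure ASC (V : Type u) where
  faces : Set (Finset V)
  nonempty_of_mem : ∀ s ∈ faces, s.Nonempty
  down_closed : ∀ s ∈ faces, ∀ t, t ⊆ s → t.Nonempty → t ∈ faces

variable {V : Type} [DecidableEq V] [LinearOrder V] {n : ℕ}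

/-- A tuple of simplices, one in each subcomplex `K i`. -/
def TupS (K : Fin n → ASC V) : Type _ := ∀ i, {s : Finset V // s ∈ (K i).faces}

/-- The total degree of a tuple of simplices. -/
def degS {K : Fin n → ASC V} (sg : TupS K) : ℕ := ∑ i, ((sg i).1.card - 1)

/-- A tuple of simplices of total degree `p`: a basis element of degree `p` of
the tensor product `⊗ᵢ C₋(Kᵢ)` of simplicial chain complexes. -/
def TupSg (K : Fin n → ASC V) (p : ℕ) : Type _ := {sg : TupS K // degS sg = p}

variable (R : Type) [CommRing R]

/-- The degree-`p` part of the tensor product `⊗ᵢ C₋(Kᵢ)` of the simplicial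
chain complexes of the subcomplexes `Kᵢ`, over `R`. -/
abbrev SCh (K : Fin n → ASC V) (p : ℕ) : Type _ := TupSg K p →₀ R

/-- The summand of the tensor-product differential acting on the `i`-th factor
of a basis tuple, with its Koszul sign: the alternating sum of the faces of the
`i`-th simplex. -/
noncomputable def dTermS {K : Fin n → ASC V} {p : ℕ} (sg : TupSg K (p + 1)) (i : Fin n) :
    SCh R K p :=
  if h : (sg.1 i).1.card ≤ 1 then 0
  else
    ∑ v ∈ (sg.1 i).1.attach,
      Finsupp.single
        (⟨Function.update sg.1 i
            ⟨(sg.1 i).1.erase v.1, by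
              refine (K i).down_closed _ (sg.1 i).2 _ (Finset.erase_subset _ _) ?_
              rw [← Finset.card_pos, Finset.card_erase_of_mem v.2]
              omega⟩, by
          have h2 := sg.2
          show degS _ = p
          unfold degS at h2 ⊢
          have e1 : ∀ k, ((Function.update sg.1 i
              ⟨(sg.1 i).1.erase v.1, by
                refine (K i).down_closed _ (sg.1 i).2 _ (Finset.erase_subset _ _) ?_
                rw [← Finset.card_pos, Finset.card_erase_of_mem v.2]
                omega⟩) k).1.card - 1
              = Function.update (fun k => (sg.1 k).1.card - 1) i
                  (((sg.1 i).1.erase v.1).card - 1) k := by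
            intro k
            rcases eq_or_ne k i with rfl | hk
            · erw [Function.update_self]; simp
            · erw [Function.update_of_ne hk, Function.update_of_ne hk]
          rw [Finset.sum_congr rfl fun k _ => e1 k,
            Finset.sum_update_of_mem (Finset.mem_univ i)]
          have e2 := Finset.sum_eq_sum_sdiff_singleton_add (Finset.mem_univ i)
            (fun k => (sg.1 k).1.card - 1)
          have e3 : ((sg.1 i).1.erase v.1).card = (sg.1 i).1.card - 1 :=
            Finset.card_erase_of_mem v.2
          have e4 : (sg.1 i).1.Nonempty := (K i).nonempty_of_mem _ (sg.1 i).2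
          have e5 : 0 < (sg.1 i).1.card := Finset.card_pos.2 e4
          omega⟩ : TupSg K p)
        ((((-1 : ℤ) ^
          ((∑ k ∈ Finset.univ.filter (fun k : Fin n => (k : ℕ) < (i : ℕ)), ((sg.1 k).1.card - 1))
            + ((sg.1 i).1.filter (fun w => w < v.1)).card) : ℤ) : R))

/-- The differential of the tensor product `⊗ᵢ C₋(Kᵢ)` of simplicial chain
complexes. -/
noncomputable def dSCh (K : Fin n → ASC V) (p : ℕ) : SCh R K (p + 1) →ₗ[R] SCh R K p :=
  Finsupp.lift (SCh R K p) R (TupSg K (p + 1)) fun sg => ∑ i : Fin n, dTermS R sg i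

/-- The differential, from degree `p` to degree `p - 1` (zero in degree `0`). -/
noncomputable def dSFrom (K : Fin n → ASC V) : ∀ p, SCh R K p →ₗ[R] SCh R K (p - 1)
  | 0 => 0
  | q + 1 => dSCh R K q

/-- The simplices of a tuple have empty common intersection. -/
def interEmptyS {K : Fin n → ASC V} (sg : TupS K) : Prop :=
  (⋂ i, ((sg i).1 : Set V)) = (∅ : Set V)

/-- The submodule `D₋({Kᵢ})` of `⊗ᵢ C₋(Kᵢ)` generated by the elementary
tensors of simplices with empty common intersection. -/
noncomputable def Dsub (K : Fin n → ASC V) (p : ℕ) : Submodule R (SCh R K p) :=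
  Submodule.span R {x | ∃ sg : TupSg K p, interEmptyS sg.1 ∧ x = Finsupp.single sg 1}

theorem interEmptyS.mono {W : Type} {K : Fin n → ASC W} {sg sg' : TupS K} (h : interEmptyS sg)
    (hle : ∀ k, (sg' k).1 ⊆ (sg k).1) : interEmptyS sg' :=
  Set.subset_eq_empty (Set.iInter_mono fun k => Finset.coe_subset.2 (hle k)) h

theorem update_val_subset {α ι : Type*} [DecidableEq ι] {P : ι → Finset α → Prop}
    {f : ∀ i, {s // P i s}} {i : ι} {s : {s // P i s}} (hs : s.1 ⊆ (f i).1) (k : ι) :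
    (Function.update f i s k).1 ⊆ (f k).1 := by
  rcases eq_or_ne k i with rfl | hk
  · rwa [Function.update_self]
  · rw [Function.update_of_ne hk]

theorem single_mem_Dsub {W : Type} {K : Fin n → ASC W} {p : ℕ} {sg : TupSg K p}
    (h : interEmptyS sg.1) (r : R) :
    Finsupp.single sg r ∈ Dsub R K p := by
  rw [← mul_one r, ← smul_eq_mul, ← Finsupp.smul_single]
  exact Submodule.smul_mem _ r (Submodule.subset_span ⟨sg, h, rfl⟩)

/-- A face of `sg` in the `i`-th factor only shrinks `sg i`, so it keeps an empty
common intersection. -/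
theorem dTermS_mem_Dsub {K : Fin n → ASC V} {p : ℕ} {sg : TupSg K (p + 1)}
    (h : interEmptyS sg.1) (i : Fin n) :
    dTermS R sg i ∈ Dsub R K p := by
  unfold dTermS
  split
  · exact Submodule.zero_mem _
  · refine Submodule.sum_mem _ fun v _ => single_mem_Dsub R (h.mono ?_) _
    exact update_val_subset (Finset.erase_subset _ _)

theorem dSCh_single_one {K : Fin n → ASC V} {p : ℕ} (sg : TupSg K (p + 1)) :
    dSCh R K p (Finsupp.single sg 1) = ∑ i, dTermS R sg i := by
  simp [dSCh]

theorem Dsub_le_comap_dSCh (K : Fin n → ASC V) (p : ℕ) :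
    Dsub R K (p + 1) ≤ (Dsub R K p).comap (dSCh R K p) := by
  refine Submodule.span_le.2 ?_
  rintro _ ⟨sg, h, rfl⟩
  rw [SetLike.mem_coe, Submodule.mem_comap, dSCh_single_one]
  exact Submodule.sum_mem _ fun i _ => dTermS_mem_Dsub R h i

/-- for an interaction simplicial complex, the submodule
`D₋({Kᵢ})` of `⊗ᵢ C₋(Kᵢ)` generated by elementary tensors of simplices with
empty common intersection is a subchain complex: it is closed under the
tensor-product differential. -/
theorem stmt17 (K : Fin n → ASC V) (p : ℕ) :
    ∀ x ∈ Dsub R K (p + 1), dSCh R K p x ∈ Dsub R K p :=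
  fun _ hx => Dsub_le_comap_dSCh R K p hx
end
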